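/- arXiv:1605.06955 — 9 statements merged into one kernel-verified Lean document; each statement's English description precedes it below -/
import Mathlib

section
/- For every measurable decision function g : ℝ^d → ℝ and every loss ℓ : ℝ → ℝ with all relevant integrals finite, the negative-class risk term can be expressed through unlabeled data: θ_N·E_{x∼p_N}[ℓ(−g(x))] = E_{x∼p}[ℓ(−g(x))] − θ_P·E_{x∼p_P}[ℓ(−g(x))]; consequently the PU risk R_PU(g) = θ_P·E_{x∼p_P}[ℓ(g(x)) − ℓ(−g(x))] + E_{x∼p}[ℓ(−g(x))] equals the PN risk R_PN(g) = θ_P·E_{x∼p_P}[ℓ(g(x))] + θ_N·E_{x∼p_N}[ℓ(−g(x))]. -/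
open MeasureTheory

/-- PU risk equals PN risk: the negative-class risk term can be expressed
through unlabeled data. -/
theorem stmt0 {d : ℕ} (pP pN : Measure (Fin d → ℝ))
    [IsProbabilityMeasure pP] [IsProbabilityMeasure pN]
    (θP θN : ℝ) (hθP : θP ∈ Set.Ioo (0:ℝ) 1) (hθN : θN = 1 - θP)
    (p : Measure (Fin d → ℝ))
    (hp : p = ENNReal.ofReal θP • pP + ENNReal.ofReal θN • pN)
    (g : (Fin d → ℝ) → ℝ) (hg : Measurable g)
    (ℓ : ℝ → ℝ) (hℓ : Measurable ℓ)
    (h1 : Integrable (fun x => ℓ (g x)) pP)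
    (h2 : Integrable (fun x => ℓ (-g x)) pP)
    (h3 : Integrable (fun x => ℓ (-g x)) pN) :
    θN * ∫ x, ℓ (-g x) ∂pN = (∫ x, ℓ (-g x) ∂p) - θP * ∫ x, ℓ (-g x) ∂pP
    ∧
    θP * (∫ x, (ℓ (g x) - ℓ (-g x)) ∂pP) + ∫ x, ℓ (-g x) ∂p
      = θP * (∫ x, ℓ (g x) ∂pP) + θN * ∫ x, ℓ (-g x) ∂pN := by
  have hθPpos : (0:ℝ) ≤ θP := le_of_lt hθP.1
  have hθNpos : (0:ℝ) ≤ θN := by rw [hθN]; linarith [hθP.2]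
  have key : ∫ x, ℓ (-g x) ∂p = θP * ∫ x, ℓ (-g x) ∂pP + θN * ∫ x, ℓ (-g x) ∂pN := by
    rw [hp, integral_add_measure, integral_smul_measure, integral_smul_measure,
      ENNReal.toReal_ofReal hθPpos, ENNReal.toReal_ofReal hθNpos, smul_eq_mul, smul_eq_mul]
    · exact h2.smul_measure ENNReal.ofReal_ne_top
    · exact h3.smul_measure ENNReal.ofReal_ne_top
  constructor
  · rw [key]; ring
  · rw [key, integral_sub h1 h2]; ring
end

section
/- For every measurable decision function g : ℝ^d → ℝ and every loss ℓ : ℝ → ℝ with all relevant integrals finite, the positive-class risk term can be expressed through unlabeled data: θ_P·E_{x∼p_P}[ℓ(g(x))] = E_{x∼p}[ℓ(g(x))] − θ_N·E_{x∼p_N}[ℓ(g(x))]; consequently the NU risk R_NU(g) = θ_N·E_{x∼p_N}[ℓ(−g(x)) − ℓ(g(x))] + E_{x∼p}[ℓ(g(x))] equals the PN risk R_PN(g) = θ_P·E_{x∼p_P}[ℓ(g(x))] + θ_N·E_{x∼p_N}[ℓ(−g(x))]. -/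
open MeasureTheory

/-- NU risk equals PN risk: the positive-class risk term can be expressed
through unlabeled data. -/
theorem stmt1 {d : ℕ} (pP pN : Measure (Fin d → ℝ))
    [IsProbabilityMeasure pP] [IsProbabilityMeasure pN]
    (θP θN : ℝ) (hθP : θP ∈ Set.Ioo (0:ℝ) 1) (hθN : θN = 1 - θP)
    (p : Measure (Fin d → ℝ))
    (hp : p = ENNReal.ofReal θP • pP + ENNReal.ofReal θN • pN)
    (g : (Fin d → ℝ) → ℝ) (hg : Measurable g)
    (ℓ : ℝ → ℝ) (hℓ : Measurable ℓ)
    (h1 : Integrable (fun x => ℓ (g x)) pP)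
    (h2 : Integrable (fun x => ℓ (g x)) pN)
    (h3 : Integrable (fun x => ℓ (-g x)) pN) :
    θP * ∫ x, ℓ (g x) ∂pP = (∫ x, ℓ (g x) ∂p) - θN * ∫ x, ℓ (g x) ∂pN
    ∧
    θN * (∫ x, (ℓ (-g x) - ℓ (g x)) ∂pN) + ∫ x, ℓ (g x) ∂p
      = θP * (∫ x, ℓ (g x) ∂pP) + θN * ∫ x, ℓ (-g x) ∂pN := by
  have hθPpos : (0:ℝ) ≤ θP := le_of_lt hθP.1
  have hθNpos : (0:ℝ) ≤ θN := by rw [hθN]; linarith [hθP.2]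
  have key : ∫ x, ℓ (g x) ∂p = θP * ∫ x, ℓ (g x) ∂pP + θN * ∫ x, ℓ (g x) ∂pN := by
    rw [hp, integral_add_measure (h1.smul_measure ENNReal.ofReal_ne_top)
      (h2.smul_measure ENNReal.ofReal_ne_top), integral_smul_measure,
      integral_smul_measure, ENNReal.toReal_ofReal hθPpos,
      ENNReal.toReal_ofReal hθNpos, smul_eq_mul, smul_eq_mul]
  constructor
  · rw [key]; ring
  · rw [key, integral_sub h3 h2]; ring
end

section
/- Suppose the loss ℓ : ℝ → ℝ satisfies the symmetry condition ℓ(m) + ℓ(−m) = 1 for all m ∈ ℝ. Then for every measurable decision function g : ℝ^d → ℝ with all relevant integrals finite, the non-convex PU risk satisfies R_{N-PU}(g) := 2·θ_P·E_{x∼p_P}[ℓ(g(x))] + E_{x∼p}[ℓ(−g(x))] − θ_P = R_PN(g), and symmetrically the non-convex NU risk satisfies R_{N-NU}(g) := 2·θ_N·E_{x∼p_N}[ℓ(−g(x))] + E_{x∼p}[ℓ(g(x))] − θ_N = R_PN(g). -/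
open MeasureTheory

/-- Under the symmetry condition ℓ(m) + ℓ(-m) = 1, the non-convex PU and NU
risks both equal the PN risk. -/
theorem stmt2 {d : ℕ} (pP pN : Measure (Fin d → ℝ))
    [IsProbabilityMeasure pP] [IsProbabilityMeasure pN]
    (θP θN : ℝ) (hθP : θP ∈ Set.Ioo (0:ℝ) 1) (hθN : θN = 1 - θP)
    (p : Measure (Fin d → ℝ))
    (hp : p = ENNReal.ofReal θP • pP + ENNReal.ofReal θN • pN)
    (g : (Fin d → ℝ) → ℝ) (hg : Measurable g)
    (ℓ : ℝ → ℝ) (hℓ : Measurable ℓ)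
    (hsym : ∀ m : ℝ, ℓ m + ℓ (-m) = 1)
    (h1 : Integrable (fun x => ℓ (g x)) pP)
    (h2 : Integrable (fun x => ℓ (-g x)) pP)
    (h3 : Integrable (fun x => ℓ (g x)) pN)
    (h4 : Integrable (fun x => ℓ (-g x)) pN) :
    2 * θP * (∫ x, ℓ (g x) ∂pP) + (∫ x, ℓ (-g x) ∂p) - θP
      = θP * (∫ x, ℓ (g x) ∂pP) + θN * ∫ x, ℓ (-g x) ∂pN
    ∧
    2 * θN * (∫ x, ℓ (-g x) ∂pN) + (∫ x, ℓ (g x) ∂p) - θN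
      = θP * (∫ x, ℓ (g x) ∂pP) + θN * ∫ x, ℓ (-g x) ∂pN := by
  obtain ⟨hθP0, hθP1⟩ := hθP
  have hθN0 : 0 ≤ θN := by simp [hθN]; linarith
  have key : ∀ f : (Fin d → ℝ) → ℝ, Integrable f pP → Integrable f pN →
      ∫ x, f x ∂p = θP * ∫ x, f x ∂pP + θN * ∫ x, f x ∂pN := by
    intro f hfP hfN
    rw [hp, integral_add_measure (hfP.smul_measure ENNReal.ofReal_ne_top)
      (hfN.smul_measure ENNReal.ofReal_ne_top),
      integral_smul_measure, integral_smul_measure,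
      ENNReal.toReal_ofReal hθP0.le, ENNReal.toReal_ofReal hθN0,
      smul_eq_mul, smul_eq_mul]
  have symP : ∫ x, ℓ (-g x) ∂pP = 1 - ∫ x, ℓ (g x) ∂pP := by
    have : ∫ x, (ℓ (g x) + ℓ (-g x)) ∂pP = 1 := by
      simp only [hsym]; simp
    rw [integral_add h1 h2] at this
    linarith
  have symN : ∫ x, ℓ (g x) ∂pN = 1 - ∫ x, ℓ (-g x) ∂pN := by
    have : ∫ x, (ℓ (g x) + ℓ (-g x)) ∂pN = 1 := by
      simp only [hsym]; simp
    rw [integral_add h3 h4] at this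
    linarith
  rw [key _ h2 h4, key _ h1 h3, symP, symN]
  constructor <;> ring_nf <;> nlinarith [hθN]
end

section
/- Suppose the loss ℓ : ℝ → ℝ satisfies the linear-odd-part condition ℓ(m) − ℓ(−m) = −m for all m ∈ ℝ. Then for every measurable decision function g : ℝ^d → ℝ with g integrable under p_P and all other relevant integrals finite, the convex PU risk satisfies R_{C-PU}(g) := θ_P·E_{x∼p_P}[−g(x)] + E_{x∼p}[ℓ(−g(x))] = R_PN(g), and symmetrically the convex NU risk satisfies R_{C-NU}(g) := θ_N·E_{x∼p_N}[g(x)] + E_{x∼p}[ℓ(g(x))] = R_PN(g) (with g integrable under p_N). -/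
open MeasureTheory

/-- Under the linear-odd-part condition ℓ(m) − ℓ(−m) = −m, the convex PU and
NU risks both equal the PN risk. -/
theorem stmt3 {d : ℕ} (pP pN : Measure (Fin d → ℝ))
    [IsProbabilityMeasure pP] [IsProbabilityMeasure pN]
    (θP θN : ℝ) (hθP : θP ∈ Set.Ioo (0:ℝ) 1) (hθN : θN = 1 - θP)
    (p : Measure (Fin d → ℝ))
    (hp : p = ENNReal.ofReal θP • pP + ENNReal.ofReal θN • pN)
    (g : (Fin d → ℝ) → ℝ) (hg : Measurable g)
    (ℓ : ℝ → ℝ) (hℓ : Measurable ℓ)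
    (hodd : ∀ m : ℝ, ℓ m - ℓ (-m) = -m)
    (hgP : Integrable g pP) (hgN : Integrable g pN)
    (h1 : Integrable (fun x => ℓ (g x)) pP)
    (h2 : Integrable (fun x => ℓ (-g x)) pP)
    (h3 : Integrable (fun x => ℓ (g x)) pN)
    (h4 : Integrable (fun x => ℓ (-g x)) pN) :
    θP * (∫ x, (-g x) ∂pP) + (∫ x, ℓ (-g x) ∂p)
      = θP * (∫ x, ℓ (g x) ∂pP) + θN * ∫ x, ℓ (-g x) ∂pN
    ∧
    θN * (∫ x, g x ∂pN) + (∫ x, ℓ (g x) ∂p)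
      = θP * (∫ x, ℓ (g x) ∂pP) + θN * ∫ x, ℓ (-g x) ∂pN := by
  have hθP0 : 0 ≤ θP := le_of_lt hθP.1
  have hθN0 : 0 ≤ θN := by rw [hθN]; linarith [hθP.2]
  have split : ∀ f : (Fin d → ℝ) → ℝ,
      Integrable f pP → Integrable f pN →
      ∫ x, f x ∂p = θP * ∫ x, f x ∂pP + θN * ∫ x, f x ∂pN := by
    intro f hfP hfN
    rw [hp, integral_add_measure, integral_smul_measure, integral_smul_measure,
      ENNReal.toReal_ofReal hθP0, ENNReal.toReal_ofReal hθN0, smul_eq_mul, smul_eq_mul]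
    · exact hfP.smul_measure ENNReal.ofReal_ne_top
    · exact hfN.smul_measure ENNReal.ofReal_ne_top
  have keyP : ∫ x, ℓ (-g x) ∂pP = ∫ x, ℓ (g x) ∂pP + ∫ x, g x ∂pP := by
    rw [← integral_add h1 hgP]
    congr 1; ext x
    have := hodd (g x); linarith
  have keyN : ∫ x, ℓ (g x) ∂pN = ∫ x, ℓ (-g x) ∂pN - ∫ x, g x ∂pN := by
    rw [← integral_sub h4 hgN]
    congr 1; ext x
    have := hodd (g x); linarith
  have negP : ∫ x, (-g x) ∂pP = -∫ x, g x ∂pP := integral_neg g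
  constructor
  · rw [split _ h2 h4, keyP, negP]; ring
  · rw [split _ h1 h3, keyN]; ring
end

section
/- Suppose the loss ℓ : ℝ → ℝ satisfies ℓ(m) + ℓ(−m) = 1 for all m ∈ ℝ. Then for every γ ∈ [0,1] and every measurable decision function g : ℝ^d → ℝ with all relevant integrals finite, the non-convex PUNU risk R_{N-PUNU}^γ(g) := 2(1−γ)·θ_P·E_{x∼p_P}[ℓ(g(x))] + 2γ·θ_N·E_{x∼p_N}[ℓ(−g(x))] + E_{x∼p}[(1−γ)·ℓ(−g(x)) + γ·ℓ(g(x))] − (1−γ)·θ_P − γ·θ_N equals the PN risk R_PN(g); in particular, for γ = 1/2 the non-convex PUNU risk agrees with R_PN(g). -/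
open MeasureTheory

/-- Under the symmetry condition ℓ(m) + ℓ(−m) = 1, for every γ ∈ [0,1] the
non-convex PUNU risk equals the PN risk; in particular so does the γ = 1/2
case. -/
theorem stmt4 {d : ℕ} (pP pN : Measure (Fin d → ℝ))
    [IsProbabilityMeasure pP] [IsProbabilityMeasure pN]
    (θP θN : ℝ) (hθP : θP ∈ Set.Ioo (0:ℝ) 1) (hθN : θN = 1 - θP)
    (p : Measure (Fin d → ℝ))
    (hp : p = ENNReal.ofReal θP • pP + ENNReal.ofReal θN • pN)
    (g : (Fin d → ℝ) → ℝ) (hg : Measurable g)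
    (ℓ : ℝ → ℝ) (hℓ : Measurable ℓ)
    (hsym : ∀ m : ℝ, ℓ m + ℓ (-m) = 1)
    (h1 : Integrable (fun x => ℓ (g x)) pP)
    (h2 : Integrable (fun x => ℓ (-g x)) pP)
    (h3 : Integrable (fun x => ℓ (g x)) pN)
    (h4 : Integrable (fun x => ℓ (-g x)) pN) :
    (∀ γ ∈ Set.Icc (0:ℝ) 1,
      2 * (1 - γ) * θP * (∫ x, ℓ (g x) ∂pP)
        + 2 * γ * θN * (∫ x, ℓ (-g x) ∂pN)
        + (∫ x, ((1 - γ) * ℓ (-g x) + γ * ℓ (g x)) ∂p)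
        - (1 - γ) * θP - γ * θN
      = θP * (∫ x, ℓ (g x) ∂pP) + θN * ∫ x, ℓ (-g x) ∂pN)
    ∧
    2 * (1 - (1/2 : ℝ)) * θP * (∫ x, ℓ (g x) ∂pP)
        + 2 * (1/2 : ℝ) * θN * (∫ x, ℓ (-g x) ∂pN)
        + (∫ x, ((1 - (1/2 : ℝ)) * ℓ (-g x) + (1/2 : ℝ) * ℓ (g x)) ∂p)
        - (1 - (1/2 : ℝ)) * θP - (1/2 : ℝ) * θN
      = θP * (∫ x, ℓ (g x) ∂pP) + θN * ∫ x, ℓ (-g x) ∂pN := by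
  have hθPpos : (0:ℝ) ≤ θP := le_of_lt hθP.1
  have hθNpos : (0:ℝ) ≤ θN := by rw [hθN]; linarith [hθP.2]
  have hA : (∫ x, ℓ (-g x) ∂pP) = 1 - ∫ x, ℓ (g x) ∂pP := by
    have h : (fun x => ℓ (-g x)) = fun x => 1 - ℓ (g x) := by
      funext x; linarith [hsym (g x)]
    rw [h, integral_sub (integrable_const 1) h1, integral_const]
    simp
  have hB : (∫ x, ℓ (g x) ∂pN) = 1 - ∫ x, ℓ (-g x) ∂pN := by
    have h : (fun x => ℓ (g x)) = fun x => 1 - ℓ (-g x) := by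
      funext x; linarith [hsym (g x)]
    rw [h, integral_sub (integrable_const 1) h4, integral_const]
    simp
  have key : ∀ γ ∈ Set.Icc (0:ℝ) 1,
      2 * (1 - γ) * θP * (∫ x, ℓ (g x) ∂pP)
        + 2 * γ * θN * (∫ x, ℓ (-g x) ∂pN)
        + (∫ x, ((1 - γ) * ℓ (-g x) + γ * ℓ (g x)) ∂p)
        - (1 - γ) * θP - γ * θN
      = θP * (∫ x, ℓ (g x) ∂pP) + θN * ∫ x, ℓ (-g x) ∂pN := by
    intro γ _
    have hfP : Integrable (fun x => (1 - γ) * ℓ (-g x) + γ * ℓ (g x)) pP :=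
      (h2.const_mul _).add (h1.const_mul _)
    have hfN : Integrable (fun x => (1 - γ) * ℓ (-g x) + γ * ℓ (g x)) pN :=
      (h4.const_mul _).add (h3.const_mul _)
    have hsplit : (∫ x, ((1 - γ) * ℓ (-g x) + γ * ℓ (g x)) ∂p)
        = θP * (∫ x, ((1 - γ) * ℓ (-g x) + γ * ℓ (g x)) ∂pP)
          + θN * ∫ x, ((1 - γ) * ℓ (-g x) + γ * ℓ (g x)) ∂pN := by
      rw [hp, integral_add_measure (hfP.smul_measure ENNReal.ofReal_ne_top)
        (hfN.smul_measure ENNReal.ofReal_ne_top),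
        integral_smul_measure, integral_smul_measure,
        ENNReal.toReal_ofReal hθPpos, ENNReal.toReal_ofReal hθNpos]
      simp [smul_eq_mul]
    have hiP : (∫ x, ((1 - γ) * ℓ (-g x) + γ * ℓ (g x)) ∂pP)
        = (1 - γ) * (∫ x, ℓ (-g x) ∂pP) + γ * ∫ x, ℓ (g x) ∂pP := by
      rw [integral_add (h2.const_mul _) (h1.const_mul _),
        MeasureTheory.integral_const_mul, MeasureTheory.integral_const_mul]
    have hiN : (∫ x, ((1 - γ) * ℓ (-g x) + γ * ℓ (g x)) ∂pN)
        = (1 - γ) * (∫ x, ℓ (-g x) ∂pN) + γ * ∫ x, ℓ (g x) ∂pN := by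
      rw [integral_add (h4.const_mul _) (h3.const_mul _),
        MeasureTheory.integral_const_mul, MeasureTheory.integral_const_mul]
    rw [hsplit, hiP, hiN, hA, hB]
    ring
  exact ⟨key, key (1/2) ⟨by norm_num, by norm_num⟩⟩
end

section
/- (Variance identities for the empirical risk estimators.) Fix a measurable g : ℝ^d → ℝ and a loss ℓ with ℓ(m) + ℓ(−m) = 1 for all m ∈ ℝ, such that ℓ(g(x)) has finite second moment under p_P, p_N, and p. Let X_P, X_N, X_U be mutually independent i.i.d. samples of sizes n_P, n_N, n_U from p_P, p_N, p respectively, and set ψ_P = θ_P²·σ_P²(g)/n_P, ψ_N = θ_N²·σ_N²(g)/n_N, σ_U²(g) = Var_{x∼p}[ℓ(−g(x))]. Then, over the joint product distribution of the samples: Var[R̂_PN(g)] = ψ_P + ψ_N; for every γ ∈ ℝ, Var[R̂_{N-PUNU}^γ(g)] = 4(1−γ)²·ψ_P + 4γ²·ψ_N + (1−2γ)²·σ_U²(g)/n_U; Var[R̂_{N-PNPU}^γ(g)] = (1+γ)²·ψ_P + (1−γ)²·ψ_N + γ²·σ_U²(g)/n_U; and Var[R̂_{N-PNNU}^γ(g)]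 = (1−γ)²·ψ_P + (1+γ)²·ψ_N + γ²·σ_U²(g)/n_U. -/
/-!
The three samples, and the points within each sample, are independent, so the variance of an
affine combination `a·R̂_P + b·R̂_N + c·R̂_{U,N} + k` is
`a² Var R̂_P + b² Var R̂_N + c² Var R̂_{U,N}`, and the empirical mean of `n` i.i.d. copies of `f`
has variance `Var f / n`. The symmetry `ℓ m + ℓ (-m) = 1` makes `R̂_{U,P} = 1 - R̂_{U,N}`, so
every estimator is such an affine combination and its variance is read off from the coefficients.
-/

open MeasureTheory ProbabilityTheory

section EmpiricalMean

variable {α : Type*}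

noncomputable def empiricalMean (f : α → ℝ) (n : ℕ) (ω : Fin n → α) : ℝ :=
  (1 / (n : ℝ)) * ∑ i, f (ω i)

-- The right-hand side is `1` unless `n = 0`.
lemma empiricalMean_add_empiricalMean {f h : α → ℝ} (hfh : ∀ x, f x + h x = 1) (n : ℕ)
    (ω : Fin n → α) : empiricalMean f n ω + empiricalMean h n ω = (n : ℝ)⁻¹ * n := by
  simp only [empiricalMean, ← mul_add, ← Finset.sum_add_distrib, hfh, Finset.sum_const,
    Finset.card_univ, Fintype.card_fin, nsmul_eq_mul, mul_one, one_div]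

variable [MeasurableSpace α] {μ : Measure α} [IsProbabilityMeasure μ] {f : α → ℝ}

lemma memLp_empiricalMean (hf : MemLp f 2 μ) (n : ℕ) :
    MemLp (empiricalMean f n) 2 (Measure.pi fun _ : Fin n => μ) :=
  (memLp_finsetSum _ fun i _ =>
    hf.comp_measurePreserving (measurePreserving_eval (fun _ => μ) i)).const_mul _

lemma variance_empiricalMean (hf : MemLp f 2 μ) (n : ℕ) :
    Var[empiricalMean f n; Measure.pi fun _ : Fin n => μ] = Var[f; μ] / n := by
  have hsum := variance_sum_pi (μ := fun _ : Fin n => μ) (X := fun _ => f) fun _ => hf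
  simp only [Finset.sum_fn, Finset.sum_const, Finset.card_univ, Fintype.card_fin,
    nsmul_eq_mul] at hsum
  unfold empiricalMean
  rw [variance_const_mul, hsum]
  rcases n.eq_zero_or_pos with rfl | hn
  · simp
  · field_simp

end EmpiricalMean

lemma variance_affine_prod₃ {Ω₁ Ω₂ Ω₃ : Type*} [MeasurableSpace Ω₁] [MeasurableSpace Ω₂]
    [MeasurableSpace Ω₃] {μ₁ : Measure Ω₁} {μ₂ : Measure Ω₂} {μ₃ : Measure Ω₃}
    [IsProbabilityMeasure μ₁] [IsProbabilityMeasure μ₂] [IsProbabilityMeasure μ₃]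
    {X : Ω₁ → ℝ} {Y : Ω₂ → ℝ} {Z : Ω₃ → ℝ}
    (hX : MemLp X 2 μ₁) (hY : MemLp Y 2 μ₂) (hZ : MemLp Z 2 μ₃) (a b c k : ℝ) :
    Var[fun ω => a * X ω.1 + b * Y ω.2.1 + c * Z ω.2.2 + k; μ₁.prod (μ₂.prod μ₃)]
      = a ^ 2 * Var[X; μ₁] + b ^ 2 * Var[Y; μ₂] + c ^ 2 * Var[Z; μ₃] := by
  have hYZ : MemLp (fun q : Ω₂ × Ω₃ => b * Y q.1 + c * Z q.2) 2 (μ₂.prod μ₃) :=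
    ((hY.const_mul b).comp_fst μ₃).add ((hZ.const_mul c).comp_snd μ₂)
  have hXYZ : MemLp (fun ω : Ω₁ × Ω₂ × Ω₃ => a * X ω.1 + (b * Y ω.2.1 + c * Z ω.2.2)) 2
      (μ₁.prod (μ₂.prod μ₃)) :=
    ((hX.const_mul a).comp_fst _).add (hYZ.comp_snd μ₁)
  rw [show (fun ω : Ω₁ × Ω₂ × Ω₃ => a * X ω.1 + b * Y ω.2.1 + c * Z ω.2.2 + k)
      = fun ω => a * X ω.1 + (b * Y ω.2.1 + c * Z ω.2.2) + k from funext fun _ => by ring,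
    variance_add_const hXYZ.aestronglyMeasurable k]
  rw [variance_add_prod (hX.const_mul a) hYZ, variance_add_prod (hY.const_mul b) (hZ.const_mul c),
    variance_const_mul, variance_const_mul, variance_const_mul, add_assoc]

theorem stmt16_general {d : ℕ} (pP pN : Measure (Fin d → ℝ))
    [IsProbabilityMeasure pP] [IsProbabilityMeasure pN]
    (θP θN : ℝ)
    (p : Measure (Fin d → ℝ)) [IsProbabilityMeasure p]
    (g : (Fin d → ℝ) → ℝ)
    (ℓ : ℝ → ℝ)
    (hsym : ∀ m : ℝ, ℓ m + ℓ (-m) = 1)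
    (hP2 : MemLp (fun x => ℓ (g x)) 2 pP)
    (hN2 : MemLp (fun x => ℓ (g x)) 2 pN)
    (hU2 : MemLp (fun x => ℓ (g x)) 2 p)
    (nP nN nU : ℕ) :
    let P := ((Measure.pi (fun _ : Fin nP => pP)).prod
      ((Measure.pi (fun _ : Fin nN => pN)).prod
        (Measure.pi (fun _ : Fin nU => p))))
    let ψP := θP^2 * variance (fun x => ℓ (g x)) pP / nP
    let ψN := θN^2 * variance (fun x => ℓ (-g x)) pN / nN
    let σU2 := variance (fun x => ℓ (-g x)) p
    let hatRP : (Fin nP → (Fin d → ℝ)) × (Fin nN → (Fin d → ℝ)) × (Fin nU → (Fin d → ℝ)) → ℝ :=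
      fun ω => (1/(nP:ℝ)) * ∑ i, ℓ (g (ω.1 i))
    let hatRN : (Fin nP → (Fin d → ℝ)) × (Fin nN → (Fin d → ℝ)) × (Fin nU → (Fin d → ℝ)) → ℝ :=
      fun ω => (1/(nN:ℝ)) * ∑ i, ℓ (-g (ω.2.1 i))
    let hatRUP : (Fin nP → (Fin d → ℝ)) × (Fin nN → (Fin d → ℝ)) × (Fin nU → (Fin d → ℝ)) → ℝ :=
      fun ω => (1/(nU:ℝ)) * ∑ i, ℓ (g (ω.2.2 i))
    let hatRUN : (Fin nP → (Fin d → ℝ)) × (Fin nN → (Fin d → ℝ)) × (Fin nU → (Fin d → ℝ)) → ℝ :=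
      fun ω => (1/(nU:ℝ)) * ∑ i, ℓ (-g (ω.2.2 i))
    variance (fun ω => θP * hatRP ω + θN * hatRN ω) P = ψP + ψN
    ∧ (∀ γ : ℝ,
        variance (fun ω => 2*(1-γ)*θP * hatRP ω + 2*γ*θN * hatRN ω
            + (1-γ) * hatRUN ω + γ * hatRUP ω - (1-γ)*θP - γ*θN) P
          = 4*(1-γ)^2 * ψP + 4*γ^2 * ψN + (1-2*γ)^2 * σU2 / nU)
    ∧ (∀ γ : ℝ,
        variance (fun ω => (1-γ) * (θP * hatRP ω + θN * hatRN ω)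
            + γ * (2*θP * hatRP ω + hatRUN ω - θP)) P
          = (1+γ)^2 * ψP + (1-γ)^2 * ψN + γ^2 * σU2 / nU)
    ∧ (∀ γ : ℝ,
        variance (fun ω => (1-γ) * (θP * hatRP ω + θN * hatRN ω)
            + γ * (2*θN * hatRN ω + hatRUP ω - θN)) P
          = (1-γ)^2 * ψP + (1+γ)^2 * ψN + γ^2 * σU2 / nU) := by
  intro P ψP ψN σU2 hatRP hatRN hatRUP hatRUN
  have hflip : (fun x => ℓ (-g x)) = fun x => 1 - ℓ (g x) := funext fun x => by
    linarith [hsym (g x)]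
  have hN2' : MemLp (fun x => ℓ (-g x)) 2 pN := hflip ▸ (memLp_const 1).sub hN2
  have hU2' : MemLp (fun x => ℓ (-g x)) 2 p := hflip ▸ (memLp_const 1).sub hU2
  have variance_affine : ∀ (F : _ → ℝ) (a b c k : ℝ),
      (∀ ω, F ω = a * θP * hatRP ω + b * θN * hatRN ω + c * hatRUN ω + k) →
        variance F P = a ^ 2 * ψP + b ^ 2 * ψN + c ^ 2 * σU2 / nU := by
    intro F a b c k hF
    rw [funext hF]
    refine (variance_affine_prod₃ (memLp_empiricalMean hP2 nP) (memLp_empiricalMean hN2' nN)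
      (memLp_empiricalMean hU2' nU) (a * θP) (b * θN) c k).trans ?_
    rw [variance_empiricalMean hP2, variance_empiricalMean hN2', variance_empiricalMean hU2']
    simp only [ψP, ψN, σU2]
    ring
  have hUP : ∀ ω, hatRUP ω = (nU : ℝ)⁻¹ * nU - hatRUN ω := fun ω =>
    eq_sub_of_add_eq (empiricalMean_add_empiricalMean (fun x => hsym (g x)) nU ω.2.2)
  refine ⟨variance_affine _ 1 1 0 0 (fun ω => by ring) |>.trans (by ring),
    fun γ => ?_, fun γ => ?_, fun γ => ?_⟩
  · exact variance_affine _ (2 * (1 - γ)) (2 * γ) (1 - 2 * γ)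
      (γ * (nU : ℝ)⁻¹ * nU - (1 - γ) * θP - γ * θN) (fun ω => by rw [hUP]; ring) |>.trans (by ring)
  · exact variance_affine _ (1 + γ) (1 - γ) γ (-(γ * θP)) (fun ω => by ring) |>.trans (by ring)
  · exact variance_affine _ (1 - γ) (1 + γ) (-γ) (γ * (nU : ℝ)⁻¹ * nU - γ * θN)
      (fun ω => by rw [hUP]; ring) |>.trans (by ring)

/-- Variance identities for the empirical PN, non-convex PUNU, PNPU, and PNNU
risk estimators over the joint product distribution of the samples. -/
theorem stmt16 {d : ℕ} (pP pN : Measure (Fin d → ℝ))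
    [IsProbabilityMeasure pP] [IsProbabilityMeasure pN]
    (θP θN : ℝ) (hθP : θP ∈ Set.Ioo (0:ℝ) 1) (hθN : θN = 1 - θP)
    (p : Measure (Fin d → ℝ)) [IsProbabilityMeasure p]
    (hp : p = ENNReal.ofReal θP • pP + ENNReal.ofReal θN • pN)
    (g : (Fin d → ℝ) → ℝ) (hg : Measurable g)
    (ℓ : ℝ → ℝ) (hℓ : Measurable ℓ)
    (hsym : ∀ m : ℝ, ℓ m + ℓ (-m) = 1)
    (hP2 : MemLp (fun x => ℓ (g x)) 2 pP)
    (hN2 : MemLp (fun x => ℓ (g x)) 2 pN)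
    (hU2 : MemLp (fun x => ℓ (g x)) 2 p)
    (nP nN nU : ℕ) (hnP : 0 < nP) (hnN : 0 < nN) (hnU : 0 < nU) :
    let P := ((Measure.pi (fun _ : Fin nP => pP)).prod
      ((Measure.pi (fun _ : Fin nN => pN)).prod
        (Measure.pi (fun _ : Fin nU => p))))
    let ψP := θP^2 * variance (fun x => ℓ (g x)) pP / nP
    let ψN := θN^2 * variance (fun x => ℓ (-g x)) pN / nN
    let σU2 := variance (fun x => ℓ (-g x)) p
    let hatRP : (Fin nP → (Fin d → ℝ)) × (Fin nN → (Fin d → ℝ)) × (Fin nU → (Fin d → ℝ)) → ℝ :=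
      fun ω => (1/(nP:ℝ)) * ∑ i, ℓ (g (ω.1 i))
    let hatRN : (Fin nP → (Fin d → ℝ)) × (Fin nN → (Fin d → ℝ)) × (Fin nU → (Fin d → ℝ)) → ℝ :=
      fun ω => (1/(nN:ℝ)) * ∑ i, ℓ (-g (ω.2.1 i))
    let hatRUP : (Fin nP → (Fin d → ℝ)) × (Fin nN → (Fin d → ℝ)) × (Fin nU → (Fin d → ℝ)) → ℝ :=
      fun ω => (1/(nU:ℝ)) * ∑ i, ℓ (g (ω.2.2 i))
    let hatRUN : (Fin nP → (Fin d → ℝ)) × (Fin nN → (Fin d → ℝ)) × (Fin nU → (Fin d → ℝ)) → ℝ :=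
      fun ω => (1/(nU:ℝ)) * ∑ i, ℓ (-g (ω.2.2 i))
    variance (fun ω => θP * hatRP ω + θN * hatRN ω) P = ψP + ψN
    ∧ (∀ γ : ℝ,
        variance (fun ω => 2*(1-γ)*θP * hatRP ω + 2*γ*θN * hatRN ω
            + (1-γ) * hatRUN ω + γ * hatRUP ω - (1-γ)*θP - γ*θN) P
          = 4*(1-γ)^2 * ψP + 4*γ^2 * ψN + (1-2*γ)^2 * σU2 / nU)
    ∧ (∀ γ : ℝ,
        variance (fun ω => (1-γ) * (θP * hatRP ω + θN * hatRN ω)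
            + γ * (2*θP * hatRP ω + hatRUN ω - θP)) P
          = (1+γ)^2 * ψP + (1-γ)^2 * ψN + γ^2 * σU2 / nU)
    ∧ (∀ γ : ℝ,
        variance (fun ω => (1-γ) * (θP * hatRP ω + θN * hatRN ω)
            + γ * (2*θN * hatRN ω + hatRUP ω - θN)) P
          = (1-γ)^2 * ψP + (1+γ)^2 * ψN + γ^2 * σU2 / nU) :=
  stmt16_general pP pN θP θN p g ℓ hsym hP2 hN2 hU2 nP nN nU
end

section
/- (Theorem 3.) Let ψ_P > 0 and ψ_N > 0, and define V(γ) = 4(1−γ)²·ψ_P + 4γ²·ψ_N (the variance of the empirical non-convex PUNU risk estimator R̂_{N-PUNU}^γ(g) in the limit n_U → ∞). Then γ_{N-PUNU} := ψ_P/(ψ_P + ψ_N) is the unique minimizer of V over ℝ and γ_{N-PUNU} ∈ [0,1]. Moreover, V(γ) < ψ_P + ψ_N (the variance of the empirical PN risk estimator) for all γ ∈ (2γ_{N-PUNU} − 1/2, 1/2) if ψ_P < ψ_N, and for all γ ∈ (1/2, 2γ_{N-PUNU} − 1/2) if ψ_P > ψ_N. The interval of such γ values has length min{|ψ_P − ψ_N|/(ψ_P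 + ψ_N), 1/2}. -/
/-- Theorem 3: the optimal combination parameter for the non-convex PUNU risk
estimator, the variance-reduction interval, and its length. -/
theorem stmt17 (ψP ψN : ℝ) (hψP : 0 < ψP) (hψN : 0 < ψN) :
    let V : ℝ → ℝ := fun γ => 4*(1-γ)^2*ψP + 4*γ^2*ψN
    let γstar : ℝ := ψP / (ψP + ψN)
    (∀ γ : ℝ, V γstar ≤ V γ)
    ∧ (∀ γ : ℝ, V γ = V γstar → γ = γstar)
    ∧ γstar ∈ Set.Icc (0:ℝ) 1
    ∧ (ψP < ψN → ∀ γ ∈ Set.Ioo (2*γstar - 1/2) (1/2 : ℝ), V γ < ψP + ψN)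
    ∧ (ψN < ψP → ∀ γ ∈ Set.Ioo (1/2 : ℝ) (2*γstar - 1/2), V γ < ψP + ψN)
    ∧ (ψP < ψN →
        1/2 - max 0 (2*γstar - 1/2) = min (|ψP - ψN| / (ψP + ψN)) (1/2))
    ∧ (ψN < ψP →
        min 1 (2*γstar - 1/2) - 1/2 = min (|ψP - ψN| / (ψP + ψN)) (1/2)) := by
  intro V γstar
  have hs : 0 < ψP + ψN := by linarith
  have hs' : ψP + ψN ≠ 0 := ne_of_gt hs
  have key : ∀ γ : ℝ, V γ - V γstar = 4*(ψP+ψN)*(γ - γstar)^2 := by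
    intro γ
    show (4*(1-γ)^2*ψP + 4*γ^2*ψN) - (4*(1-γstar)^2*ψP + 4*γstar^2*ψN)
        = 4*(ψP+ψN)*(γ - γstar)^2
    simp only [γstar]
    field_simp
    ring
  have hγ2 : 2*γstar - 1/2 = (2*ψP - (ψP+ψN)/2)/(ψP+ψN) := by
    simp only [γstar]; rw [eq_div_iff hs']; field_simp
  refine ⟨?_, ?_, ?_, ?_, ?_, ?_, ?_⟩
  · intro γ
    nlinarith [key γ, mul_nonneg hs.le (sq_nonneg (γ - γstar))]
  · intro γ hγ
    have hk := key γ
    rw [hγ, sub_self] at hk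
    have hsq : (γ - γstar)^2 = 0 := by
      by_contra h
      have h2 : 0 < (γ - γstar)^2 := (sq_nonneg _).lt_of_ne' h
      nlinarith
    have := pow_eq_zero_iff (n := 2) (by norm_num) |>.mp hsq
    linarith
  · exact ⟨div_nonneg hψP.le hs.le, (div_le_one hs).mpr (by linarith)⟩
  · intro hlt γ hγ
    obtain ⟨h1, h2⟩ := hγ
    rw [hγ2] at h1
    have h1' : 2*ψP - (ψP+ψN)/2 < γ*(ψP+ψN) := (div_lt_iff₀ hs).mp h1
    have hf := mul_pos (sub_pos.mpr h1') (sub_pos.mpr h2)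
    show 4*(1-γ)^2*ψP + 4*γ^2*ψN < ψP + ψN
    nlinarith [hf]
  · intro hlt γ hγ
    obtain ⟨h1, h2⟩ := hγ
    rw [hγ2] at h2
    have h2' : γ*(ψP+ψN) < 2*ψP - (ψP+ψN)/2 := (lt_div_iff₀ hs).mp h2
    have hf := mul_pos (sub_pos.mpr h2') (sub_pos.mpr h1)
    show 4*(1-γ)^2*ψP + 4*γ^2*ψN < ψP + ψN
    nlinarith [hf]
  · intro hlt
    have habs : |ψP - ψN| = ψN - ψP := by rw [abs_of_neg (by linarith)]; ring
    rw [habs, hγ2]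
    rcases le_or_gt ψN (3*ψP) with h | h
    · rw [max_eq_right (div_nonneg (by linarith) hs.le),
        min_eq_left (by rw [div_le_iff₀ hs]; linarith)]
      field_simp; ring
    · rw [max_eq_left (by apply le_of_lt; apply div_neg_of_neg_of_pos (by linarith) hs),
        min_eq_right (by rw [le_div_iff₀ hs]; linarith)]
      norm_num
  · intro hlt
    have habs : |ψP - ψN| = ψP - ψN := abs_of_pos (by linarith)
    rw [habs, hγ2]
    rcases le_or_gt ψP (3*ψN) with h | h
    · rw [min_eq_right (by rw [div_le_iff₀ hs]; linarith),
        min_eq_left (by rw [div_le_iff₀ hs]; linarith)]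
      field_simp; ring
    · rw [min_eq_left (by rw [le_div_iff₀ hs]; linarith),
        min_eq_right (by rw [le_div_iff₀ hs]; linarith)]
      norm_num
end

section
/- (Theorem 4.) Let ψ_P > 0 and ψ_N > 0, and define W_PU(γ) = (1+γ)²·ψ_P + (1−γ)²·ψ_N and W_NU(γ) = (1−γ)²·ψ_P + (1+γ)²·ψ_N (the variances of the empirical non-convex PNPU and PNNU risk estimators in the limit n_U → ∞). Then γ_{N-PNPU} := (ψ_N − ψ_P)/(ψ_P + ψ_N) is the unique minimizer of W_PU over ℝ, γ_{N-PNNU} := (ψ_P − ψ_N)/(ψ_P + ψ_N) is the unique minimizer of W_NU over ℝ, γ_{N-PNPU} ∈ [0,1] whenever ψ_P ≤ ψ_N, and γ_{N-PNNU} ∈ [0,1] whenever ψ_P ≥ ψ_N. Moreover, if ψ_P < ψ_N then W_PU(γ) < ψ_P + ψ_N (the variance of the empirical PN risk estimator) for all γ ∈ (0, 2γ_{N-PNPU}), and if ψ_P > ψ_N then W_NU(γ) < ψ_P + ψ_N for all γ ∈ (0, 2γ_{N-PNNU}). In particular, if 3ψ_P ≤ ψ_N then W_PU(γ) < ψ_P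 + ψ_N for every γ ∈ (0,1), and if ψ_P ≥ 3ψ_N then W_NU(γ) < ψ_P + ψ_N for every γ ∈ (0,1). -/
/-- Theorem 4: optimal combination parameters for the non-convex PNPU and PNNU
risk estimators and their variance-reduction intervals. -/
theorem stmt18 (ψP ψN : ℝ) (hψP : 0 < ψP) (hψN : 0 < ψN) :
    let WPU : ℝ → ℝ := fun γ => (1+γ)^2*ψP + (1-γ)^2*ψN
    let WNU : ℝ → ℝ := fun γ => (1-γ)^2*ψP + (1+γ)^2*ψN
    let γPU : ℝ := (ψN - ψP) / (ψP + ψN)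
    let γNU : ℝ := (ψP - ψN) / (ψP + ψN)
    (∀ γ : ℝ, WPU γPU ≤ WPU γ)
    ∧ (∀ γ : ℝ, WPU γ = WPU γPU → γ = γPU)
    ∧ (∀ γ : ℝ, WNU γNU ≤ WNU γ)
    ∧ (∀ γ : ℝ, WNU γ = WNU γNU → γ = γNU)
    ∧ (ψP ≤ ψN → γPU ∈ Set.Icc (0:ℝ) 1)
    ∧ (ψN ≤ ψP → γNU ∈ Set.Icc (0:ℝ) 1)
    ∧ (ψP < ψN → ∀ γ ∈ Set.Ioo (0:ℝ) (2*γPU), WPU γ < ψP + ψN)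
    ∧ (ψN < ψP → ∀ γ ∈ Set.Ioo (0:ℝ) (2*γNU), WNU γ < ψP + ψN)
    ∧ (3*ψP ≤ ψN → ∀ γ ∈ Set.Ioo (0:ℝ) 1, WPU γ < ψP + ψN)
    ∧ (3*ψN ≤ ψP → ∀ γ ∈ Set.Ioo (0:ℝ) 1, WNU γ < ψP + ψN) := by
  intro WPU WNU γPU γNU
  have hs : 0 < ψP + ψN := by linarith
  have hPU : γPU * (ψP + ψN) = ψN - ψP := div_mul_cancel₀ _ (ne_of_gt hs)
  have hNU : γNU * (ψP + ψN) = ψP - ψN := div_mul_cancel₀ _ (ne_of_gt hs)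
  refine ⟨?_, ?_, ?_, ?_, ?_, ?_, ?_, ?_, ?_, ?_⟩
  · intro γ
    simp only [WPU]
    nlinarith [mul_nonneg hs.le (sq_nonneg (γ - γPU)), hPU]
  · intro γ h
    simp only [WPU] at h
    have key : (ψP + ψN) * (γ - γPU)^2 = 0 := by
      linear_combination h - 2*(γ - γPU)*hPU
    have h2 : (γ - γPU)^2 = 0 := by
      rcases mul_eq_zero.mp key with h' | h'
      · linarith
      · exact h'
    have := (pow_eq_zero_iff two_ne_zero).mp h2
    linarith [sub_eq_zero.mp this]
  · intro γ
    simp only [WNU]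
    nlinarith [mul_nonneg hs.le (sq_nonneg (γ - γNU)), hNU]
  · intro γ h
    simp only [WNU] at h
    have key : (ψP + ψN) * (γ - γNU)^2 = 0 := by
      linear_combination h - 2*(γ - γNU)*hNU
    have h2 : (γ - γNU)^2 = 0 := by
      rcases mul_eq_zero.mp key with h' | h'
      · linarith
      · exact h'
    have := (pow_eq_zero_iff two_ne_zero).mp h2
    linarith [sub_eq_zero.mp this]
  · intro h
    constructor
    · exact div_nonneg (by linarith) hs.le
    · rw [div_le_one hs]; linarith
  · intro h
    constructor
    · exact div_nonneg (by linarith) hs.le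
    · rw [div_le_one hs]; linarith
  · intro h γ hγ
    obtain ⟨h0, h1⟩ := hγ
    simp only [WPU]
    nlinarith [hPU, mul_pos hs h0, mul_pos (mul_pos hs h0) (by linarith : 0 < 2*γPU - γ)]
  · intro h γ hγ
    obtain ⟨h0, h1⟩ := hγ
    simp only [WNU]
    nlinarith [hNU, mul_pos hs h0, mul_pos (mul_pos hs h0) (by linarith : 0 < 2*γNU - γ)]
  · intro h γ hγ
    obtain ⟨h0, h1⟩ := hγ
    simp only [WPU]
    nlinarith [mul_pos (mul_pos hs h0) (by linarith : (0:ℝ) < 1 - γ), mul_pos h0 (by linarith : (0:ℝ) < 1 - γ)]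
  · intro h γ hγ
    obtain ⟨h0, h1⟩ := hγ
    simp only [WNU]
    nlinarith [mul_pos (mul_pos hs h0) (by linarith : (0:ℝ) < 1 - γ), mul_pos h0 (by linarith : (0:ℝ) < 1 - γ)]
end

section
/- (Corollary to Theorems 3 and 4.) Let ψ_P > 0 and ψ_N > 0. Define V(γ) = 4(1−γ)²·ψ_P + 4γ²·ψ_N, W_PU(γ) = (1+γ)²·ψ_P + (1−γ)²·ψ_N, W_NU(γ) = (1−γ)²·ψ_P + (1+γ)²·ψ_N, and their respective minimizers γ_{N-PUNU} = ψ_P/(ψ_P+ψ_N), γ_{N-PNPU} = (ψ_N−ψ_P)/(ψ_P+ψ_N), γ_{N-PNNU} = (ψ_P−ψ_N)/(ψ_P+ψ_N). Then the minimum values of all three functions coincide: V(γ_{N-PUNU}) = W_PU(γ_{N-PNPU}) = W_NU(γ_{N-PNNU}) = 4·ψ_P·ψ_N/(ψ_P + ψ_N). -/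
/-- Corollary to Theorems 3 and 4: the minimum variances achievable by the
non-convex PUNU, PNPU, and PNNU risk estimators at their optimal combination
parameters all equal 4·ψP·ψN/(ψP + ψN). -/
theorem stmt19 (ψP ψN : ℝ) (hψP : 0 < ψP) (hψN : 0 < ψN) :
    let V : ℝ → ℝ := fun γ => 4*(1-γ)^2*ψP + 4*γ^2*ψN
    let WPU : ℝ → ℝ := fun γ => (1+γ)^2*ψP + (1-γ)^2*ψN
    let WNU : ℝ → ℝ := fun γ => (1-γ)^2*ψP + (1+γ)^2*ψN
    let γPUNU : ℝ := ψP / (ψP + ψN)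
    let γPNPU : ℝ := (ψN - ψP) / (ψP + ψN)
    let γPNNU : ℝ := (ψP - ψN) / (ψP + ψN)
    V γPUNU = 4 * ψP * ψN / (ψP + ψN)
    ∧ WPU γPNPU = 4 * ψP * ψN / (ψP + ψN)
    ∧ WNU γPNNU = 4 * ψP * ψN / (ψP + ψN) := by
  have h : ψP + ψN ≠ 0 := by positivity
  refine ⟨?_, ?_, ?_⟩ <;> field_simp <;> ring
end
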